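/- Let G' be the Type B Whitney flip of a simple graph G along (H, v1, v2). Then G' has the same vertex set as G, the same number of edges as G, and G' is connected if and only if G is connected. Consequently, when G is connected, the Betti numbers e − v + 1 of G and G' (where e is the number of edges and v the number of vertices) are equal. -/

import Mathlib

open SimpleGraph

/-- The vertex map of the Type B Whitney flip: `v1 ↦ v2`, all other vertices fixed. -/
def tauB {V : Type*} [DecidableEq V] (v1 v2 : V) (x : V) : V :=
  if x = v1 then v2 else x

/-- The Type B Whitney flip of `G` along `(H, v1, v2)` (where `v2 ∉ H`): edges with both
endpoints in `H` are mapped by `tauB v1 v2`; all other edges are kept. -/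
def typeBFlip {V : Type*} [DecidableEq V] (G : SimpleGraph V) (v1 v2 : V) (H : Set V)
    (hv2 : v2 ∉ H) : SimpleGraph V where
  Adj a b :=
    (∃ x y : V, x ∈ H ∧ y ∈ H ∧ G.Adj x y ∧ a = tauB v1 v2 x ∧ b = tauB v1 v2 y) ∨
    (¬(a ∈ H ∧ b ∈ H) ∧ G.Adj a b)
  symm := by
    constructor
    rintro a b (⟨x, y, hx, hy, h, ha, hb⟩ | ⟨hn, h⟩)
    · exact Or.inl ⟨y, x, hy, hx, h.symm, hb, ha⟩
    · exact Or.inr ⟨fun ⟨hb', ha'⟩ => hn ⟨ha', hb'⟩, h.symm⟩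
  loopless := by
    constructor
    rintro a (⟨x, y, hx, hy, h, ha, hb⟩ | ⟨_, h⟩)
    · have hxy : tauB v1 v2 x = tauB v1 v2 y := ha ▸ hb
      unfold tauB at hxy
      split_ifs at hxy with hx1 hy1 hy1
      · exact h.ne (hx1.trans hy1.symm)
      · exact hv2 (hxy ▸ hy)
      · exact hv2 (hxy ▸ hx)
      · exact h.ne hxy
    · exact G.loopless.irrefl _ h

/-! On `H` the flip acts as the transposition `(v1 v2)`, so it carries the edges of `G` inside `H`
injectively onto new edges. These never coincide with the kept edges: a kept edge meets the
complement of `H`, and the only way a swapped edge `s(v2, y)` can do so is with `y ∈ H \ {v1}`,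
which `hHedge` forbids for an edge of `G`. Connectivity is preserved because `v1v2` is an edge of
both graphs, so each edge of one graph joins vertices that are reachable in the other. -/

namespace SimpleGraph

variable {V : Type*}

theorem reachable_le_of_adj_le_reachable {G K : SimpleGraph V} (h : G.Adj ≤ K.Reachable) :
    G.Reachable ≤ K.Reachable := by
  rw [reachable_eq_reflTransGen (G := K)] at h
  rw [reachable_eq_reflTransGen, reachable_eq_reflTransGen]
  exact Relation.reflTransGen_closed h

theorem connected_iff_of_adj_le_reachable {G K : SimpleGraph V} (hGK : G.Adj ≤ K.Reachable)
    (hKG : K.Adj ≤ G.Reachable) : G.Connected ↔ K.Connected := by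
  simp only [connected_iff]
  exact ⟨fun ⟨hc, hne⟩ => ⟨fun a b => reachable_le_of_adj_le_reachable hGK _ _ (hc a b), hne⟩,
    fun ⟨hc, hne⟩ => ⟨fun a b => reachable_le_of_adj_le_reachable hKG _ _ (hc a b), hne⟩⟩

end SimpleGraph

section TypeBFlip

variable {V : Type*} [DecidableEq V] {G : SimpleGraph V} {v1 v2 : V} {H : Set V}

lemma reachable_tauB {K : SimpleGraph V} (h : K.Adj v1 v2) (x : V) :
    K.Reachable x (tauB v1 v2 x) := by
  unfold tauB
  split_ifs with hx
  · exact hx ▸ h.reachable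
  · rfl

lemma tauB_eq_swap (hv2 : v2 ∉ H) {x : V} (hx : x ∈ H) : tauB v1 v2 x = Equiv.swap v1 v2 x := by
  unfold tauB
  split_ifs with h
  · simp [h]
  · exact (Equiv.swap_apply_of_ne_of_ne h (ne_of_mem_of_not_mem hx hv2)).symm

lemma typeBFlip_adj_iff (hv2 : v2 ∉ H) {a b : V} :
    (typeBFlip G v1 v2 H hv2).Adj a b ↔
      (Equiv.swap v1 v2 a ∈ H ∧ Equiv.swap v1 v2 b ∈ H ∧
        G.Adj (Equiv.swap v1 v2 a) (Equiv.swap v1 v2 b)) ∨ (¬(a ∈ H ∧ b ∈ H) ∧ G.Adj a b) := by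
  refine or_congr_left ⟨?_, fun ⟨ha, hb, hab⟩ => ⟨_, _, ha, hb, hab, ?_, ?_⟩⟩
  · rintro ⟨x, y, hx, hy, hxy, rfl, rfl⟩
    simpa [tauB_eq_swap hv2 hx, tauB_eq_swap hv2 hy] using ⟨hx, hy, hxy⟩
  · simp [tauB_eq_swap hv2 ha]
  · simp [tauB_eq_swap hv2 hb]

lemma typeBFlip_edgeSet (hv2 : v2 ∉ H) :
    (typeBFlip G v1 v2 H hv2).edgeSet =
      Sym2.map (Equiv.swap v1 v2) '' (G.edgeSet ∩ H.sym2) ∪ G.edgeSet \ H.sym2 := by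
  have hinv : Function.Involutive (Sym2.map (Equiv.swap v1 v2)) := fun e => by
    simp [Sym2.map_map]
  ext ⟨a, b⟩
  rw [hinv.image_eq_preimage_symm]
  simp only [mem_edgeSet, typeBFlip_adj_iff, Set.preimage_inter, Set.mem_union, Set.mem_inter_iff,
    Set.mem_preimage, Sym2.map_mk, Set.mk_mem_sym2_iff, Set.mem_sdiff]
  tauto

lemma not_adj_swap_of_swap_notMem (hv2 : v2 ∉ H)
    (hHedge : ∀ x y : V, G.Adj x y → x ∈ H \ ({v1} : Set V) → y ∈ H) {x y : V} (hx : x ∈ H)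
    (hy : y ∈ H) (hxy : G.Adj x y) (hσx : Equiv.swap v1 v2 x ∉ H) :
    ¬G.Adj (Equiv.swap v1 v2 x) (Equiv.swap v1 v2 y) := by
  obtain rfl : x = v1 := by
    by_contra h
    exact hσx (by rwa [Equiv.swap_apply_of_ne_of_ne h (ne_of_mem_of_not_mem hx hv2)])
  have hyx : y ≠ x := hxy.ne.symm
  rw [Equiv.swap_apply_left, Equiv.swap_apply_of_ne_of_ne hyx (ne_of_mem_of_not_mem hy hv2)]
  exact fun h => hv2 (hHedge y v2 h.symm ⟨hy, hyx⟩)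

lemma disjoint_swap_image_inter_sym2_sdiff_sym2 (hv2 : v2 ∉ H)
    (hHedge : ∀ x y : V, G.Adj x y → x ∈ H \ ({v1} : Set V) → y ∈ H) :
    Disjoint (Sym2.map (Equiv.swap v1 v2) '' (G.edgeSet ∩ H.sym2)) (G.edgeSet \ H.sym2) := by
  rw [Set.disjoint_left]
  rintro _ ⟨⟨x, y⟩, ⟨hxy, hx, hy⟩, rfl⟩ ⟨hσxy, hσH⟩
  simp only [Sym2.map_mk, mem_edgeSet, Set.mk_mem_sym2_iff, not_and_or] at hxy hσxy hσH
  rcases hσH with hσx | hσy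
  · exact not_adj_swap_of_swap_notMem hv2 hHedge hx hy hxy hσx hσxy
  · exact not_adj_swap_of_swap_notMem hv2 hHedge hy hx hxy.symm hσy hσxy.symm

lemma typeBFlip_edgeSet_ncard [Finite V] (hv2 : v2 ∉ H)
    (hHedge : ∀ x y : V, G.Adj x y → x ∈ H \ ({v1} : Set V) → y ∈ H) :
    (typeBFlip G v1 v2 H hv2).edgeSet.ncard = G.edgeSet.ncard := by
  rw [typeBFlip_edgeSet hv2,
    Set.ncard_union_eq (disjoint_swap_image_inter_sym2_sdiff_sym2 hv2 hHedge),
    Set.ncard_image_of_injective _ (Sym2.map.injective (Equiv.swap v1 v2).injective),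
    Set.ncard_inter_add_ncard_sdiff_eq_ncard]

lemma typeBFlip_adj_le_reachable (hadj : G.Adj v1 v2) (hv2 : v2 ∉ H) :
    (typeBFlip G v1 v2 H hv2).Adj ≤ G.Reachable := by
  rintro _ _ (⟨x, y, -, -, hxy, rfl, rfl⟩ | ⟨-, hab⟩)
  · exact (reachable_tauB hadj x).symm.trans (hxy.reachable.trans (reachable_tauB hadj y))
  · exact hab.reachable

lemma adj_le_typeBFlip_reachable (hadj : G.Adj v1 v2) (hv2 : v2 ∉ H) :
    G.Adj ≤ (typeBFlip G v1 v2 H hv2).Reachable := by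
  intro a b hab
  by_cases hH : a ∈ H ∧ b ∈ H
  · have hflip : (typeBFlip G v1 v2 H hv2).Adj v1 v2 := Or.inr ⟨fun h => hv2 h.2, hadj⟩
    have hτ : (typeBFlip G v1 v2 H hv2).Adj (tauB v1 v2 a) (tauB v1 v2 b) :=
      Or.inl ⟨a, b, hH.1, hH.2, hab, rfl, rfl⟩
    exact (reachable_tauB hflip a).trans (hτ.reachable.trans (reachable_tauB hflip b).symm)
  · have hkept : (typeBFlip G v1 v2 H hv2).Adj a b := Or.inr ⟨hH, hab⟩
    exact hkept.reachable

end TypeBFlip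

theorem typeBFlip_edgeCount_connected_betti_general {V : Type*} [Fintype V] [DecidableEq V]
    (G : SimpleGraph V) (v1 v2 : V) (hadj : G.Adj v1 v2)
    (H : Set V) (hv2 : v2 ∉ H)
    (hHedge : ∀ x y : V, G.Adj x y → x ∈ H \ ({v1} : Set V) → y ∈ H) :
    (typeBFlip G v1 v2 H hv2).edgeSet.ncard = G.edgeSet.ncard ∧
      ((typeBFlip G v1 v2 H hv2).Connected ↔ G.Connected) ∧
      (G.Connected →
        ((typeBFlip G v1 v2 H hv2).edgeSet.ncard : ℤ) - Fintype.card V + 1 =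
          (G.edgeSet.ncard : ℤ) - Fintype.card V + 1) := by
  have hcard := typeBFlip_edgeSet_ncard hv2 hHedge
  refine ⟨hcard, ?_, fun _ => by rw [hcard]⟩
  exact connected_iff_of_adj_le_reachable (typeBFlip_adj_le_reachable hadj hv2)
    (adj_le_typeBFlip_reachable hadj hv2)

/-- the Type B Whitney flip has the same vertex set (both graphs live on
`V`), the same number of edges, preserves connectedness, and hence preserves the Betti
number `e - v + 1` of a connected graph. -/
theorem typeBFlip_edgeCount_connected_betti {V : Type*} [Fintype V] [DecidableEq V]
    (G : SimpleGraph V) (v1 v2 : V) (hadj : G.Adj v1 v2)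
    (H : Set V) (h1 : v1 ∈ H) (hv2 : v2 ∉ H) (hHconn : (G.induce H).Connected)
    (hHedge : ∀ x y : V, G.Adj x y → x ∈ H \ ({v1} : Set V) → y ∈ H) :
    (typeBFlip G v1 v2 H hv2).edgeSet.ncard = G.edgeSet.ncard ∧
      ((typeBFlip G v1 v2 H hv2).Connected ↔ G.Connected) ∧
      (G.Connected →
        ((typeBFlip G v1 v2 H hv2).edgeSet.ncard : ℤ) - Fintype.card V + 1 =
          (G.edgeSet.ncard : ℤ) - Fintype.card V + 1) :=
  typeBFlip_edgeCount_connected_betti_general G v1 v2 hadj H hv2 hHedge
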